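/- arXiv:1305.7117 — 4 statements merged into one kernel-verified Lean document; each statement's English description precedes it below -/
import Mathlib

section
/- Fix i ∈ {1,…,N}. Suppose the i-th closed-loop system satisfies x_i'(t) = A_c x_i(t) − Σ_{j ∈ N_i} α_{ij}(t)·(B (F x_{ij}(t))) for all t ≥ 0, and the edge-dependent gains α_{ij} : [0,∞) → ℝ are differentiable and evolve by the σ-modified adaptation law α_{ij}'(t) = ⟨x_i(t), B (F x_{ij}(t))⟩ − σ α_{ij}(t) for each j ∈ N_i, where σ > 0. Then the Lyapunov functional V_i(t) := ‖x_i(t)‖² + Σ_{j ∈ N_i} α_{ij}(t)² is differentiable and satisfies V_i'(t) = 2⟨A_c x_i(t), x_i(t)⟩ − 2σ Σ_{j ∈ N_i} α_{ij}(t)² ≤ −κ‖x_i(t)‖² − 2σ Σ_{j ∈ N_i} α_{ij}(t)² for all t ≥ 0. -/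
open scoped RealInnerProductSpace

/-- The adaptation law feeds back exactly the cross terms `⟪x, a_j • w_j⟫` that the coupling
contributes to `d/dt ‖x‖²`, so they cancel and only the drift `v` and the σ-leakage remain. -/
theorem hasDerivAt_norm_sq_add_sum_sq_of_adaptation
    {E ι : Type*} [NormedAddCommGroup E] [InnerProductSpace ℝ E]
    (s : Finset ι) {x : ℝ → E} {a : ι → ℝ → ℝ} {w : ι → E} {v : E} {σ t : ℝ}
    (hx : HasDerivAt x (v - ∑ j ∈ s, a j t • w j) t)
    (ha : ∀ j ∈ s, HasDerivAt (a j) (⟪x t, w j⟫ - σ * a j t) t) :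
    HasDerivAt (fun r => ‖x r‖ ^ 2 + ∑ j ∈ s, a j r ^ 2)
      (2 * ⟪v, x t⟫ - 2 * σ * ∑ j ∈ s, a j t ^ 2) t := by
  refine (hx.norm_sq.add (HasDerivAt.fun_sum fun j hj => (ha j hj).fun_pow 2)).congr_deriv ?_
  have hsq (j : ι) : ((2 : ℕ) : ℝ) * a j t ^ (2 - 1) * (⟪x t, w j⟫ - σ * a j t) =
      2 * ⟪x t, a j t • w j⟫ - 2 * σ * a j t ^ 2 := by
    rw [real_inner_smul_right]; ring
  rw [Finset.sum_congr rfl fun j _ => hsq j, Finset.sum_sub_distrib, ← Finset.mul_sum,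
    ← Finset.mul_sum, inner_sub_right, inner_sum, real_inner_comm v]
  ring

theorem stmt0_general
    {H U : Type*} [NormedAddCommGroup H] [InnerProductSpace ℝ H]
    [NormedAddCommGroup U] [InnerProductSpace ℝ U]
    (Ac : H →L[ℝ] H) (B : U →L[ℝ] H) (F : H →L[ℝ] U)
    (κ σ : ℝ)
    (hdiss : ∀ φ : H, 2 * ⟪Ac φ, φ⟫ ≤ -κ * ‖φ‖ ^ 2)
    (N : ℕ) (x : Fin N → ℝ → H) (i : Fin N) (Ni : Finset (Fin N))
    (α : Fin N → ℝ → ℝ)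
    (hx : ∀ t : ℝ, 0 ≤ t →
      HasDerivAt (x i)
        (Ac (x i t) - ∑ j ∈ Ni, α j t • B (F (x i t - x j t))) t)
    (hα : ∀ j ∈ Ni, ∀ t : ℝ, 0 ≤ t →
      HasDerivAt (α j) (⟪x i t, B (F (x i t - x j t))⟫ - σ * α j t) t) :
    ∀ t : ℝ, 0 ≤ t →
      HasDerivAt (fun s => ‖x i s‖ ^ 2 + ∑ j ∈ Ni, (α j s) ^ 2)
        (2 * ⟪Ac (x i t), x i t⟫ - 2 * σ * ∑ j ∈ Ni, (α j t) ^ 2) t ∧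
      2 * ⟪Ac (x i t), x i t⟫ - 2 * σ * ∑ j ∈ Ni, (α j t) ^ 2 ≤
        -κ * ‖x i t‖ ^ 2 - 2 * σ * ∑ j ∈ Ni, (α j t) ^ 2 := by
  intro t ht
  exact ⟨hasDerivAt_norm_sq_add_sum_sq_of_adaptation Ni (hx t ht) fun j hj => hα j hj t ht,
    by linarith [hdiss (x i t)]⟩

/-- σ-modified adaptation law. The Lyapunov functional
`V_i(t) = ‖x_i(t)‖² + Σ_{j ∈ N_i} α_{ij}(t)²` is differentiable with
derivative `2⟨A_c x_i, x_i⟩ − 2σ Σ α_{ij}²`, which is bounded above by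
`−κ‖x_i‖² − 2σ Σ α_{ij}²`. -/
theorem stmt0
    {H U : Type*} [NormedAddCommGroup H] [InnerProductSpace ℝ H] [CompleteSpace H]
    [NormedAddCommGroup U] [InnerProductSpace ℝ U] [CompleteSpace U]
    (Ac : H →L[ℝ] H) (B : U →L[ℝ] H) (F : H →L[ℝ] U)
    (κ σ : ℝ) (hκ : 0 < κ) (hσ : 0 < σ)
    (hdiss : ∀ φ : H, 2 * ⟪Ac φ, φ⟫ ≤ -κ * ‖φ‖ ^ 2)
    (N : ℕ) (x : Fin N → ℝ → H) (i : Fin N) (Ni : Finset (Fin N))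
    (α : Fin N → ℝ → ℝ)
    (hx : ∀ t : ℝ, 0 ≤ t →
      HasDerivAt (x i)
        (Ac (x i t) - ∑ j ∈ Ni, α j t • B (F (x i t - x j t))) t)
    (hα : ∀ j ∈ Ni, ∀ t : ℝ, 0 ≤ t →
      HasDerivAt (α j) (⟪x i t, B (F (x i t - x j t))⟫ - σ * α j t) t) :
    ∀ t : ℝ, 0 ≤ t →
      HasDerivAt (fun s => ‖x i s‖ ^ 2 + ∑ j ∈ Ni, (α j s) ^ 2)
        (2 * ⟪Ac (x i t), x i t⟫ - 2 * σ * ∑ j ∈ Ni, (α j t) ^ 2) t ∧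
      2 * ⟪Ac (x i t), x i t⟫ - 2 * σ * ∑ j ∈ Ni, (α j t) ^ 2 ≤
        -κ * ‖x i t‖ ^ 2 - 2 * σ * ∑ j ∈ Ni, (α j t) ^ 2 :=
  stmt0_general Ac B F κ σ hdiss N x i Ni α hx hα
end

section
/- Fix i ∈ {1,…,N}. Suppose the i-th closed-loop system satisfies x_i'(t) = A_c x_i(t) − Σ_{j ∈ N_i} α_{ij}(t)·(B (F x_{ij}(t))) for all t ≥ 0, and the edge-dependent gains α_{ij} : [0,∞) → ℝ are differentiable and evolve by the unmodified adaptation law α_{ij}'(t) = ⟨x_i(t), B (F x_{ij}(t))⟩ for each j ∈ N_i. Then the Lyapunov functional V_i(t) := ‖x_i(t)‖² + Σ_{j ∈ N_i} α_{ij}(t)² satisfies V_i'(t) ≤ −κ‖x_i(t)‖² for all t ≥ 0; in particular V_i is nonincreasing. -/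
open scoped RealInnerProductSpace

/-!
Differentiating `V = ‖x‖² + Σ_j α_j²` along the closed loop gives
`2⟪A_c x, x⟫ - 2 Σ_j α_j ⟪x, B F x_ij⟫ + 2 Σ_j α_j α_j'`, and the adaptation law
`α_j' = ⟪x, B F x_ij⟫` makes the two coupling sums cancel, leaving `V' = 2⟪A_c x, x⟫`.
Dissipativity bounds this by `-κ‖x‖² ≤ 0`, and monotonicity follows from the mean value theorem.
-/

theorem antitoneOn_Ici_of_hasDerivAt_nonpos {f f' : ℝ → ℝ} {a : ℝ}
    (hf : ∀ t ∈ Set.Ici a, HasDerivAt f (f' t) t) (hf' : ∀ t ∈ Set.Ici a, f' t ≤ 0) :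
    AntitoneOn f (Set.Ici a) := by
  refine antitoneOn_of_hasDerivWithinAt_nonpos (f' := f') (convex_Ici a)
    (fun t ht => (hf t ht).continuousAt.continuousWithinAt) (fun t ht => ?_) (fun t ht => ?_)
  all_goals rw [interior_Ici] at ht
  · exact (hf t (Set.mem_Ici_of_Ioi ht)).hasDerivWithinAt
  · exact hf' t (Set.mem_Ici_of_Ioi ht)

theorem hasDerivAt_norm_sq_add_sum_sq_of_adaptive {E ι : Type*} [NormedAddCommGroup E]
    [InnerProductSpace ℝ E] {x : ℝ → E} {α : ι → ℝ → ℝ} {s : Finset ι} {a : E} {b : ι → E}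
    {t : ℝ} (hx : HasDerivAt x (a - ∑ j ∈ s, α j t • b j) t)
    (hα : ∀ j ∈ s, HasDerivAt (α j) ⟪x t, b j⟫ t) :
    HasDerivAt (fun τ => ‖x τ‖ ^ 2 + ∑ j ∈ s, α j τ ^ 2) (2 * ⟪x t, a⟫) t := by
  have hsum : HasDerivAt (fun τ => ∑ j ∈ s, α j τ ^ 2)
      (∑ j ∈ s, 2 * (α j t * ⟪x t, b j⟫)) t :=
    HasDerivAt.fun_sum fun j hj => ((hα j hj).fun_pow 2).congr_deriv (by norm_num [mul_assoc])
  refine (hx.norm_sq.add hsum).congr_deriv ?_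
  rw [inner_sub_right, inner_sum, ← Finset.mul_sum]
  simp only [real_inner_smul_right]
  ring

theorem stmt1_general
    {H U : Type*} [NormedAddCommGroup H] [InnerProductSpace ℝ H]
    [NormedAddCommGroup U] [InnerProductSpace ℝ U]
    (Ac : H →L[ℝ] H) (B : U →L[ℝ] H) (F : H →L[ℝ] U)
    (κ : ℝ) (hκ : 0 < κ)
    (hdiss : ∀ φ : H, 2 * ⟪Ac φ, φ⟫ ≤ -κ * ‖φ‖ ^ 2)
    (N : ℕ) (x : Fin N → ℝ → H) (i : Fin N) (Ni : Finset (Fin N))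
    (α : Fin N → ℝ → ℝ)
    (hx : ∀ t : ℝ, 0 ≤ t →
      HasDerivAt (x i)
        (Ac (x i t) - ∑ j ∈ Ni, α j t • B (F (x i t - x j t))) t)
    (hα : ∀ j ∈ Ni, ∀ t : ℝ, 0 ≤ t →
      HasDerivAt (α j) (⟪x i t, B (F (x i t - x j t))⟫) t) :
    (∀ t : ℝ, 0 ≤ t →
      ∃ v : ℝ,
        HasDerivAt (fun s => ‖x i s‖ ^ 2 + ∑ j ∈ Ni, (α j s) ^ 2) v t ∧
        v ≤ -κ * ‖x i t‖ ^ 2) ∧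
    AntitoneOn (fun s => ‖x i s‖ ^ 2 + ∑ j ∈ Ni, (α j s) ^ 2) (Set.Ici 0) := by
  have hV : ∀ t ∈ Set.Ici (0 : ℝ), HasDerivAt (fun s => ‖x i s‖ ^ 2 + ∑ j ∈ Ni, (α j s) ^ 2)
      (2 * ⟪Ac (x i t), x i t⟫) t := fun t ht => by
    rw [real_inner_comm]
    exact hasDerivAt_norm_sq_add_sum_sq_of_adaptive (hx t ht) fun j hj => hα j hj t ht
  refine ⟨fun t ht => ⟨_, hV t ht, hdiss _⟩, antitoneOn_Ici_of_hasDerivAt_nonpos hV ?_⟩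
  exact fun t _ => (hdiss _).trans
    (mul_nonpos_of_nonpos_of_nonneg (neg_nonpos.2 hκ.le) (sq_nonneg _))

/-- unmodified adaptation law. The Lyapunov functional
`V_i(t) = ‖x_i(t)‖² + Σ_{j ∈ N_i} α_{ij}(t)²` has a derivative bounded by
`−κ‖x_i(t)‖²` at each `t ≥ 0`; in particular it is nonincreasing on `[0,∞)`. -/
theorem stmt1
    {H U : Type*} [NormedAddCommGroup H] [InnerProductSpace ℝ H] [CompleteSpace H]
    [NormedAddCommGroup U] [InnerProductSpace ℝ U] [CompleteSpace U]
    (Ac : H →L[ℝ] H) (B : U →L[ℝ] H) (F : H →L[ℝ] U)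
    (κ : ℝ) (hκ : 0 < κ)
    (hdiss : ∀ φ : H, 2 * ⟪Ac φ, φ⟫ ≤ -κ * ‖φ‖ ^ 2)
    (N : ℕ) (x : Fin N → ℝ → H) (i : Fin N) (Ni : Finset (Fin N))
    (α : Fin N → ℝ → ℝ)
    (hx : ∀ t : ℝ, 0 ≤ t →
      HasDerivAt (x i)
        (Ac (x i t) - ∑ j ∈ Ni, α j t • B (F (x i t - x j t))) t)
    (hα : ∀ j ∈ Ni, ∀ t : ℝ, 0 ≤ t →
      HasDerivAt (α j) (⟪x i t, B (F (x i t - x j t))⟫) t) :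
    (∀ t : ℝ, 0 ≤ t →
      ∃ v : ℝ,
        HasDerivAt (fun s => ‖x i s‖ ^ 2 + ∑ j ∈ Ni, (α j s) ^ 2) v t ∧
        v ≤ -κ * ‖x i t‖ ^ 2) ∧
    AntitoneOn (fun s => ‖x i s‖ ^ 2 + ∑ j ∈ Ni, (α j s) ^ 2) (Set.Ici 0) :=
  stmt1_general Ac B F κ hκ hdiss N x i Ni α hx hα
end

section
/- Suppose for every i ∈ {1,…,N} the closed-loop system satisfies x_i'(t) = A_c x_i(t) − Σ_{j ∈ N_i} α_{ij}(t)·(B (F x_{ij}(t))) for all t ≥ 0, with differentiable edge-dependent gains evolving by α_{ij}'(t) = ⟨x_i(t), B (F x_{ij}(t))⟩ − σ α_{ij}(t), σ > 0, for j ∈ N_i. Set V_i(t) := ‖x_i(t)‖² + Σ_{j ∈ N_i} α_{ij}(t)² and c := min{κ, 2σ}. Then Σ_{i=1}^N V_i(t) ≤ e^{−c t} Σ_{i=1}^N V_i(0) for all t ≥ 0; consequently ‖x_i(t)‖ → 0 as t → ∞ for every i, and α_{ij}(t) → 0 as t → ∞ for every i and every j ∈ N_i. -/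
open scoped RealInnerProductSpace
open Filter

/-!
Along the closed loop, the derivative of `V = ∑ᵢ (‖xᵢ‖² + ∑ⱼ αᵢⱼ²)` contains the coupling
terms `∓ 2 αᵢⱼ ⟪xᵢ, B F xᵢⱼ⟫` once from the state equation and once from the adaptation law, so
they cancel; what is left, `2⟪A_c xᵢ, xᵢ⟫ - 2σ ∑ⱼ αᵢⱼ²`, is at most `-c V` by dissipativity.
Grönwall's inequality then gives `V t ≤ e^{-ct} V 0`, and every `‖xᵢ‖²` and `αᵢⱼ²` is
squeezed between `0` and `V`.
-/

theorem le_exp_mul_of_hasDerivAt_le_mul {f f' : ℝ → ℝ} {K : ℝ}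
    (hf : ∀ t, 0 ≤ t → HasDerivAt f (f' t) t) (bound : ∀ t, 0 ≤ t → f' t ≤ K * f t)
    {t : ℝ} (ht : 0 ≤ t) : f t ≤ Real.exp (K * t) * f 0 := by
  have h := le_gronwallBound_of_liminf_deriv_right_le (b := t) (ε := 0)
    (fun s hs => (hf s hs.1).continuousAt.continuousWithinAt)
    (fun s hs _ hr => (hf s hs.1).hasDerivWithinAt.liminf_right_slope_le hr) le_rfl
    (fun s hs => by simpa using bound s hs.1) t ⟨ht, le_rfl⟩
  rwa [sub_zero, gronwallBound_ε0, mul_comm] at h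

theorem tendsto_zero_of_sq_norm_le {E : Type*} [SeminormedAddCommGroup E] {l : Filter ℝ}
    {f : ℝ → E} {V : ℝ → ℝ} (hV : Tendsto V l (nhds 0)) (h : ∀ t, ‖f t‖ ^ 2 ≤ V t) :
    Tendsto f l (nhds 0) := by
  refine squeeze_zero_norm (fun t => Real.le_sqrt_of_sq_le (h t)) ?_
  simpa using hV.sqrt

theorem tendsto_zero_of_le_exp_neg_mul {V : ℝ → ℝ} {c : ℝ} (hc : 0 < c) (hV : ∀ t, 0 ≤ V t)
    (hdecay : ∀ t, 0 ≤ t → V t ≤ Real.exp (-c * t) * V 0) : Tendsto V atTop (nhds 0) := by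
  have hexp : Tendsto (fun t => Real.exp (-c * t) * V 0) atTop (nhds 0) := by
    simpa [neg_mul] using
      (Real.tendsto_exp_neg_atTop_nhds_zero.comp (tendsto_id.const_mul_atTop hc)).mul_const (V 0)
  exact squeeze_zero' (Eventually.of_forall hV) ((eventually_ge_atTop 0).mono hdecay) hexp

section AdaptiveGain

variable {H : Type*} [NormedAddCommGroup H] [InnerProductSpace ℝ H] {ι : Type*}

theorem two_inner_sub_sum_smul_add_sum_adaptive (s : Finset ι) (y z : H) (a : ι → ℝ)
    (v : ι → H) (σ : ℝ) :
    2 * ⟪y, z - ∑ j ∈ s, a j • v j⟫ + ∑ j ∈ s, 2 * a j * (⟪y, v j⟫ - σ * a j) =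
      2 * ⟪y, z⟫ - 2 * σ * ∑ j ∈ s, a j ^ 2 := by
  have hgain : ∑ j ∈ s, 2 * a j * (⟪y, v j⟫ - σ * a j) =
      2 * ∑ j ∈ s, a j * ⟪y, v j⟫ - 2 * σ * ∑ j ∈ s, a j ^ 2 := by
    rw [Finset.mul_sum, Finset.mul_sum, ← Finset.sum_sub_distrib]
    exact Finset.sum_congr rfl fun j _ => by ring
  rw [inner_sub_right, inner_sum, hgain]
  simp only [real_inner_smul_right]
  ring

theorem two_inner_sub_sum_smul_add_sum_adaptive_le {A : H → H} {κ σ c : ℝ}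
    (hdiss : ∀ φ : H, 2 * ⟪A φ, φ⟫ ≤ -κ * ‖φ‖ ^ 2) (hcκ : c ≤ κ) (hcσ : c ≤ 2 * σ)
    (s : Finset ι) (y : H) (a : ι → ℝ) (v : ι → H) :
    2 * ⟪y, A y - ∑ j ∈ s, a j • v j⟫ + ∑ j ∈ s, 2 * a j * (⟪y, v j⟫ - σ * a j) ≤
      -c * (‖y‖ ^ 2 + ∑ j ∈ s, a j ^ 2) := by
  rw [two_inner_sub_sum_smul_add_sum_adaptive, real_inner_comm]
  have hy := hdiss y
  have hy2 : 0 ≤ ‖y‖ ^ 2 := by positivity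
  have ha2 : 0 ≤ ∑ j ∈ s, a j ^ 2 := by positivity
  nlinarith

end AdaptiveGain

section NetworkLyapunov

variable {H : Type*} [NormedAddCommGroup H] {ι : Type*} [Fintype ι]

def networkLyapunov (x : ι → ℝ → H) (Ni : ι → Finset ι) (α : ι → ι → ℝ → ℝ) (t : ℝ) : ℝ :=
  ∑ i, (‖x i t‖ ^ 2 + ∑ j ∈ Ni i, α i j t ^ 2)

variable {x : ι → ℝ → H} {Ni : ι → Finset ι} {α : ι → ι → ℝ → ℝ}

theorem networkLyapunov_nonneg (t : ℝ) : 0 ≤ networkLyapunov x Ni α t :=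
  Finset.sum_nonneg fun _ _ => by positivity

theorem sq_norm_le_networkLyapunov (i : ι) (t : ℝ) : ‖x i t‖ ^ 2 ≤ networkLyapunov x Ni α t :=
  calc ‖x i t‖ ^ 2 ≤ ‖x i t‖ ^ 2 + ∑ j ∈ Ni i, α i j t ^ 2 :=
        le_add_of_nonneg_right (by positivity)
    _ ≤ networkLyapunov x Ni α t :=
        Finset.single_le_sum (f := fun k => ‖x k t‖ ^ 2 + ∑ j ∈ Ni k, α k j t ^ 2)
          (fun _ _ => by positivity) (Finset.mem_univ i)

theorem sq_le_networkLyapunov {i j : ι} (hj : j ∈ Ni i) (t : ℝ) :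
    α i j t ^ 2 ≤ networkLyapunov x Ni α t :=
  calc α i j t ^ 2 ≤ ∑ j ∈ Ni i, α i j t ^ 2 :=
        Finset.single_le_sum (f := fun j => α i j t ^ 2) (fun _ _ => by positivity) hj
    _ ≤ ‖x i t‖ ^ 2 + ∑ j ∈ Ni i, α i j t ^ 2 := le_add_of_nonneg_left (by positivity)
    _ ≤ networkLyapunov x Ni α t :=
        Finset.single_le_sum (f := fun k => ‖x k t‖ ^ 2 + ∑ j ∈ Ni k, α k j t ^ 2)
          (fun _ _ => by positivity) (Finset.mem_univ i)

theorem networkLyapunov_le_exp [InnerProductSpace ℝ H]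
    {U : Type*} [NormedAddCommGroup U] [InnerProductSpace ℝ U]
    {Ac : H →L[ℝ] H} {B : U →L[ℝ] H} {F : H →L[ℝ] U} {κ σ c : ℝ}
    (hdiss : ∀ φ : H, 2 * ⟪Ac φ, φ⟫ ≤ -κ * ‖φ‖ ^ 2) (hcκ : c ≤ κ) (hcσ : c ≤ 2 * σ)
    (hx : ∀ i, ∀ t : ℝ, 0 ≤ t →
      HasDerivAt (x i) (Ac (x i t) - ∑ j ∈ Ni i, α i j t • B (F (x i t - x j t))) t)
    (hα : ∀ i, ∀ j ∈ Ni i, ∀ t : ℝ, 0 ≤ t →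
      HasDerivAt (α i j) (⟪x i t, B (F (x i t - x j t))⟫ - σ * α i j t) t)
    {t : ℝ} (ht : 0 ≤ t) :
    networkLyapunov x Ni α t ≤ Real.exp (-c * t) * networkLyapunov x Ni α 0 := by
  refine le_exp_mul_of_hasDerivAt_le_mul (f' := fun s => ∑ i,
      (2 * ⟪x i s, Ac (x i s) - ∑ j ∈ Ni i, α i j s • B (F (x i s - x j s))⟫ +
        ∑ j ∈ Ni i, 2 * α i j s * (⟪x i s, B (F (x i s - x j s))⟫ - σ * α i j s)))
    (fun s hs => ?_) (fun s hs => ?_) ht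
  · refine HasDerivAt.fun_sum fun i _ => (hx i s hs).norm_sq.add
      (HasDerivAt.fun_sum fun j hj => ?_)
    simpa [mul_assoc] using (hα i j hj s hs).fun_pow 2
  · simp only [networkLyapunov, Finset.mul_sum]
    exact Finset.sum_le_sum fun i _ =>
      two_inner_sub_sum_smul_add_sum_adaptive_le hdiss hcκ hcσ _ _ _ _

end NetworkLyapunov

theorem stmt2_general
    {H U : Type*} [NormedAddCommGroup H] [InnerProductSpace ℝ H]
    [NormedAddCommGroup U] [InnerProductSpace ℝ U]
    (Ac : H →L[ℝ] H) (B : U →L[ℝ] H) (F : H →L[ℝ] U)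
    (κ σ : ℝ) (hκ : 0 < κ) (hσ : 0 < σ)
    (hdiss : ∀ φ : H, 2 * ⟪Ac φ, φ⟫ ≤ -κ * ‖φ‖ ^ 2)
    (N : ℕ) (x : Fin N → ℝ → H) (Ni : Fin N → Finset (Fin N))
    (α : Fin N → Fin N → ℝ → ℝ)
    (hx : ∀ i, ∀ t : ℝ, 0 ≤ t →
      HasDerivAt (x i)
        (Ac (x i t) - ∑ j ∈ Ni i, α i j t • B (F (x i t - x j t))) t)
    (hα : ∀ i, ∀ j ∈ Ni i, ∀ t : ℝ, 0 ≤ t →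
      HasDerivAt (α i j) (⟪x i t, B (F (x i t - x j t))⟫ - σ * α i j t) t) :
    (∀ t : ℝ, 0 ≤ t →
      ∑ i, (‖x i t‖ ^ 2 + ∑ j ∈ Ni i, (α i j t) ^ 2) ≤
        Real.exp (-(min κ (2 * σ)) * t) *
          ∑ i, (‖x i 0‖ ^ 2 + ∑ j ∈ Ni i, (α i j 0) ^ 2)) ∧
    (∀ i, Tendsto (fun t => ‖x i t‖) atTop (nhds 0)) ∧
    (∀ i, ∀ j ∈ Ni i, Tendsto (α i j) atTop (nhds 0)) := by
  have hdecay : ∀ t : ℝ, 0 ≤ t → networkLyapunov x Ni α t ≤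
      Real.exp (-(min κ (2 * σ)) * t) * networkLyapunov x Ni α 0 := fun t ht =>
    networkLyapunov_le_exp hdiss (min_le_left _ _) (min_le_right _ _) hx hα ht
  have hV : Tendsto (networkLyapunov x Ni α) atTop (nhds 0) :=
    tendsto_zero_of_le_exp_neg_mul (lt_min hκ (by positivity)) networkLyapunov_nonneg hdecay
  refine ⟨hdecay, fun i => ?_, fun i j hj => ?_⟩
  · exact tendsto_zero_iff_norm_tendsto_zero.1
      (tendsto_zero_of_sq_norm_le hV (sq_norm_le_networkLyapunov i))
  · exact tendsto_zero_of_sq_norm_le hV fun t => by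
      simpa only [Real.norm_eq_abs, sq_abs] using sq_le_networkLyapunov hj t

/-- with the σ-modified adaptation law for all agents, the total
Lyapunov functional decays exponentially with rate `c = min{κ, 2σ}`; hence all
state norms and all adaptive gains converge to zero as `t → ∞`. -/
theorem stmt2
    {H U : Type*} [NormedAddCommGroup H] [InnerProductSpace ℝ H] [CompleteSpace H]
    [NormedAddCommGroup U] [InnerProductSpace ℝ U] [CompleteSpace U]
    (Ac : H →L[ℝ] H) (B : U →L[ℝ] H) (F : H →L[ℝ] U)
    (κ σ : ℝ) (hκ : 0 < κ) (hσ : 0 < σ)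
    (hdiss : ∀ φ : H, 2 * ⟪Ac φ, φ⟫ ≤ -κ * ‖φ‖ ^ 2)
    (N : ℕ) (x : Fin N → ℝ → H) (Ni : Fin N → Finset (Fin N))
    (α : Fin N → Fin N → ℝ → ℝ)
    (hx : ∀ i, ∀ t : ℝ, 0 ≤ t →
      HasDerivAt (x i)
        (Ac (x i t) - ∑ j ∈ Ni i, α i j t • B (F (x i t - x j t))) t)
    (hα : ∀ i, ∀ j ∈ Ni i, ∀ t : ℝ, 0 ≤ t →
      HasDerivAt (α i j) (⟪x i t, B (F (x i t - x j t))⟫ - σ * α i j t) t) :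
    (∀ t : ℝ, 0 ≤ t →
      ∑ i, (‖x i t‖ ^ 2 + ∑ j ∈ Ni i, (α i j t) ^ 2) ≤
        Real.exp (-(min κ (2 * σ)) * t) *
          ∑ i, (‖x i 0‖ ^ 2 + ∑ j ∈ Ni i, (α i j 0) ^ 2)) ∧
    (∀ i, Tendsto (fun t => ‖x i t‖) atTop (nhds 0)) ∧
    (∀ i, ∀ j ∈ Ni i, Tendsto (α i j) atTop (nhds 0)) :=
  stmt2_general Ac B F κ σ hκ hσ hdiss N x Ni α hx hα
end

section
/- Suppose the aggregate closed-loop adaptive system satisfies, for every i ∈ {1,…,N} and all t ≥ 0, x_i'(t) = A_c x_i(t) − Σ_{j=1}^N L_{ij}(t)·(B (F x_j(t))), where the entries of the time-varying gain matrix L(t) ∈ ℝ^{N×N} are differentiable and evolve by L_{ij}'(t) = ⟨x_i(t), B (F x_j(t))⟩ − σ L_{ij}(t) with σ > 0. Then the function W(t) := Σ_{i=1}^N ‖x_i(t)‖² + Σ_{i,j=1}^N L_{ij}(t)² is differentiable and satisfies W'(t) = 2 Σ_{i=1}^N ⟨A_c x_i(t), x_i(t)⟩ − 2σ Σ_{i,j=1}^N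 L_{ij}(t)² ≤ −κ Σ_{i=1}^N ‖x_i(t)‖² − 2σ Σ_{i,j=1}^N L_{ij}(t)² for all t ≥ 0 (the cross terms −⟨B(F x_j), x_i⟩·L_{ij} from the state equation and +⟨x_i, B(F x_j)⟩·L_{ij} from the adaptation cancel exactly). -/
open scoped RealInnerProductSpace

/-!
Differentiating `W` gives `2 Σ_i ⟪x_i, ẋ_i⟫ + 2 Σ_{i,j} L_{ij} L̇_{ij}`. The coupling
`−Σ_j L_{ij} B F x_j` in the state equation contributes `−2 Σ_{i,j} L_{ij} ⟪x_i, B F x_j⟫`,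
which is exactly cancelled by the gradient part of the adaptation law, leaving the
dissipative term `2 Σ_i ⟪A_c x_i, x_i⟫ ≤ −κ Σ_i ‖x_i‖²` and the leakage `−2σ Σ_{i,j} L_{ij}²`.
-/

open Finset

section

variable {ι H : Type*} [Fintype ι] [NormedAddCommGroup H] [InnerProductSpace ℝ H]

theorem hasDerivAt_sum_norm_sq {x : ι → ℝ → H} {x' : ι → H} {t : ℝ}
    (hx : ∀ i, HasDerivAt (x i) (x' i) t) :
    HasDerivAt (fun s => ∑ i, ‖x i s‖ ^ 2) (∑ i, 2 * ⟪x i t, x' i⟫) t :=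
  HasDerivAt.fun_sum fun i _ => (hx i).norm_sq

theorem hasDerivAt_sum_sum_sq {M : ℝ → Matrix ι ι ℝ} {M' : Matrix ι ι ℝ} {t : ℝ}
    (hM : ∀ i j, HasDerivAt (fun s => M s i j) (M' i j) t) :
    HasDerivAt (fun s => ∑ i, ∑ j, M s i j ^ 2) (∑ i, ∑ j, 2 * M t i j * M' i j) t :=
  HasDerivAt.fun_sum fun i _ => HasDerivAt.fun_sum fun j _ => by
    simpa using (hM i j).fun_pow 2

theorem sum_inner_coupling_add_adaptation (σ : ℝ) (v a b : ι → H) (M : Matrix ι ι ℝ) :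
    ∑ i, 2 * ⟪v i, a i - ∑ j, M i j • b j⟫
        + ∑ i, ∑ j, 2 * M i j * (⟪v i, b j⟫ - σ * M i j)
      = 2 * ∑ i, ⟪a i, v i⟫ - 2 * σ * ∑ i, ∑ j, M i j ^ 2 := by
  simp only [inner_sub_right, inner_sum, real_inner_smul_right, real_inner_comm (a _),
    mul_sub, sum_sub_distrib, mul_sum]
  ring_nf
  simp only [mul_comm σ]

theorem two_mul_sum_inner_le {A : H →L[ℝ] H} {κ : ℝ}
    (hdiss : ∀ φ : H, 2 * ⟪A φ, φ⟫ ≤ -κ * ‖φ‖ ^ 2) (v : ι → H) :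
    2 * ∑ i, ⟪A (v i), v i⟫ ≤ -κ * ∑ i, ‖v i‖ ^ 2 := by
  rw [mul_sum, mul_sum]
  exact sum_le_sum fun i _ => hdiss (v i)

end

theorem stmt3_general
    {H U : Type*} [NormedAddCommGroup H] [InnerProductSpace ℝ H]
    [NormedAddCommGroup U] [InnerProductSpace ℝ U]
    (Ac : H →L[ℝ] H) (B : U →L[ℝ] H) (F : H →L[ℝ] U)
    (κ σ : ℝ)
    (hdiss : ∀ φ : H, 2 * ⟪Ac φ, φ⟫ ≤ -κ * ‖φ‖ ^ 2)
    (N : ℕ) (x : Fin N → ℝ → H)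
    (L : ℝ → Matrix (Fin N) (Fin N) ℝ)
    (hx : ∀ i, ∀ t : ℝ, 0 ≤ t →
      HasDerivAt (x i)
        (Ac (x i t) - ∑ j, L t i j • B (F (x j t))) t)
    (hL : ∀ i j, ∀ t : ℝ, 0 ≤ t →
      HasDerivAt (fun s => L s i j)
        (⟪x i t, B (F (x j t))⟫ - σ * L t i j) t) :
    ∀ t : ℝ, 0 ≤ t →
      HasDerivAt
        (fun s => ∑ i, ‖x i s‖ ^ 2 + ∑ i, ∑ j, (L s i j) ^ 2)
        (2 * ∑ i, ⟪Ac (x i t), x i t⟫ - 2 * σ * ∑ i, ∑ j, (L t i j) ^ 2) t ∧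
      2 * ∑ i, ⟪Ac (x i t), x i t⟫ - 2 * σ * ∑ i, ∑ j, (L t i j) ^ 2 ≤
        -κ * ∑ i, ‖x i t‖ ^ 2 - 2 * σ * ∑ i, ∑ j, (L t i j) ^ 2 := by
  intro t ht
  have hW := (hasDerivAt_sum_norm_sq fun i => hx i t ht).add
    (hasDerivAt_sum_sum_sq fun i j => hL i j t ht)
  rw [sum_inner_coupling_add_adaptation] at hW
  exact ⟨hW, by linarith [two_mul_sum_inner_le hdiss fun i => x i t]⟩

/-- aggregate adaptive closed loop with time-varying gain matrix
`L(t)`. The function `W(t) = Σ_i ‖x_i(t)‖² + Σ_{i,j} L_{ij}(t)²` is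
differentiable with derivative `2 Σ_i ⟨A_c x_i, x_i⟩ − 2σ Σ_{i,j} L_{ij}²`,
bounded above by `−κ Σ_i ‖x_i‖² − 2σ Σ_{i,j} L_{ij}²`. -/
theorem stmt3
    {H U : Type*} [NormedAddCommGroup H] [InnerProductSpace ℝ H] [CompleteSpace H]
    [NormedAddCommGroup U] [InnerProductSpace ℝ U] [CompleteSpace U]
    (Ac : H →L[ℝ] H) (B : U →L[ℝ] H) (F : H →L[ℝ] U)
    (κ σ : ℝ) (hκ : 0 < κ) (hσ : 0 < σ)
    (hdiss : ∀ φ : H, 2 * ⟪Ac φ, φ⟫ ≤ -κ * ‖φ‖ ^ 2)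
    (N : ℕ) (x : Fin N → ℝ → H)
    (L : ℝ → Matrix (Fin N) (Fin N) ℝ)
    (hx : ∀ i, ∀ t : ℝ, 0 ≤ t →
      HasDerivAt (x i)
        (Ac (x i t) - ∑ j, L t i j • B (F (x j t))) t)
    (hL : ∀ i j, ∀ t : ℝ, 0 ≤ t →
      HasDerivAt (fun s => L s i j)
        (⟪x i t, B (F (x j t))⟫ - σ * L t i j) t) :
    ∀ t : ℝ, 0 ≤ t →
      HasDerivAt
        (fun s => ∑ i, ‖x i s‖ ^ 2 + ∑ i, ∑ j, (L s i j) ^ 2)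
        (2 * ∑ i, ⟪Ac (x i t), x i t⟫ - 2 * σ * ∑ i, ∑ j, (L t i j) ^ 2) t ∧
      2 * ∑ i, ⟪Ac (x i t), x i t⟫ - 2 * σ * ∑ i, ∑ j, (L t i j) ^ 2 ≤
        -κ * ∑ i, ‖x i t‖ ^ 2 - 2 * σ * ∑ i, ∑ j, (L t i j) ^ 2 :=
  stmt3_general Ac B F κ σ hdiss N x L hx hL
end
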